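/- arXiv:1912.10933 — 5 statements merged into one kernel-verified Lean document; each statement's English description precedes it below -/
import Mathlib

section
/- For u in H^{1/2}_+(𝕋), Tr(K_u²) = M(u), where K_u := H_{S*u} is the shifted Hankel operator and S* the adjoint shift; consequently ‖u‖²_{L²} = Tr(H_u²) − Tr(K_u²). -/
/-!
The Hankel matrix `(û(j + k))` of `H_u` contains the coefficient `û(n)` exactly `n + 1` times,
once on each entry of the `n`-th antidiagonal, so `Tr(H_u²) = ∑ (n + 1)|û(n)|²`. The matrix
`(û(j + k + 1))` of `K_u` contains `û(n)` exactly `n` times, so `Tr(K_u²) = M(u)`, and the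
difference of the two traces is `∑ |û(n)|² = ‖u‖²_{L²}`.
-/

open Finset

lemma tsum_antidiagonal_comp_add (f : ℕ → ℝ) (n : ℕ) :
    ∑' x : antidiagonal n, f (x.1.1 + x.1.2) = ((n : ℝ) + 1) * f n := by
  rw [tsum_fintype, Finset.sum_coe_sort (antidiagonal n) fun x => f (x.1 + x.2),
    Finset.sum_congr rfl fun x hx => by rw [mem_antidiagonal.mp hx], sum_const,
    Nat.card_antidiagonal, nsmul_eq_mul]
  push_cast
  rfl

/-- Both sides are summable or neither is, and a non-summable `tsum` is `0`. -/
lemma tsum_prod_comp_add_eq_tsum_succ_mul (f : ℕ → ℝ) (hf : ∀ n, 0 ≤ f n) :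
    ∑' q : ℕ × ℕ, f (q.1 + q.2) = ∑' n : ℕ, ((n : ℝ) + 1) * f n := by
  let e := HasAntidiagonal.sigmaAntidiagonalEquivProd (A := ℕ)
  let g : (Σ n : ℕ, antidiagonal n) → ℝ := fun p => f (p.2.1.1 + p.2.1.2)
  rw [← e.tsum_eq]
  change ∑' p, g p = _
  by_cases hsum : Summable fun n : ℕ => ((n : ℝ) + 1) * f n
  · have hg : Summable g := by
      rw [summable_sigma_of_nonneg fun p => hf _]
      exact ⟨fun _ => Summable.of_finite, by simpa only [tsum_antidiagonal_comp_add] using hsum⟩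
    rw [hg.tsum_sigma' fun _ => Summable.of_finite]
    exact tsum_congr (tsum_antidiagonal_comp_add f)
  · have hg : ¬ Summable g := by
      rw [summable_sigma_of_nonneg fun p => hf _]
      simpa only [tsum_antidiagonal_comp_add, not_and_or] using Or.inr hsum
    rw [tsum_eq_zero_of_not_summable hg, tsum_eq_zero_of_not_summable hsum]

/-- For `u ∈ H^{1/2}_+`, identified with its Fourier coefficients `u : ℕ → ℂ` with
`∑ (k+1)|û(k)|² < ∞`, the squared Hilbert–Schmidt norm of the shifted Hankel operator
`K_u = H_{S*u}` (with matrix entries `û(j+k+1)`) equals the momentum `M(u)`;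
consequently `‖u‖²_{L²} = Tr(H_u²) − Tr(K_u²)`. -/
theorem stmt2 (u : ℕ → ℂ)
    (hu : Summable (fun k : ℕ => ((k : ℝ) + 1) * ‖u k‖ ^ 2)) :
    (∑' q : ℕ × ℕ, ‖u (q.1 + q.2 + 1)‖ ^ 2) = ∑' k : ℕ, (k : ℝ) * ‖u k‖ ^ 2 ∧
    (∑' k : ℕ, ‖u k‖ ^ 2) =
      (∑' q : ℕ × ℕ, ‖u (q.1 + q.2)‖ ^ 2) - ∑' q : ℕ × ℕ, ‖u (q.1 + q.2 + 1)‖ ^ 2 := by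
  have hL2 : Summable fun k : ℕ => ‖u k‖ ^ 2 :=
    hu.of_nonneg_of_le (fun k => by positivity) fun k => le_mul_of_one_le_left (by positivity)
      (by linarith [k.cast_nonneg (α := ℝ)])
  have hM : Summable fun k : ℕ => (k : ℝ) * ‖u k‖ ^ 2 :=
    hu.of_nonneg_of_le (fun k => by positivity) fun k => by gcongr; linarith
  have hK : ∑' q : ℕ × ℕ, ‖u (q.1 + q.2 + 1)‖ ^ 2 = ∑' k : ℕ, (k : ℝ) * ‖u k‖ ^ 2 := by
    rw [tsum_prod_comp_add_eq_tsum_succ_mul (fun n => ‖u (n + 1)‖ ^ 2) fun n => by positivity,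
      hM.tsum_eq_zero_add]
    simp
  have hH : ∑' q : ℕ × ℕ, ‖u (q.1 + q.2)‖ ^ 2 =
      ∑' k : ℕ, (k : ℝ) * ‖u k‖ ^ 2 + ∑' k : ℕ, ‖u k‖ ^ 2 := by
    rw [tsum_prod_comp_add_eq_tsum_succ_mul (fun n => ‖u n‖ ^ 2) fun n => by positivity,
      ← hM.tsum_add hL2]
    exact tsum_congr fun k => by ring
  exact ⟨hK, by rw [hH, hK]; ring⟩
end

section
/- For u ∈ L²_+(𝕋), the operators satisfy K_u² = H_u² − (·|u)u, i.e. for every f ∈ L²_+, K_u²(f) = H_u²(f) − (f|u)·u (where (f|u) denotes the L² inner product). -/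
open scoped ComplexConjugate

/-!
Both sides expand into the series `∑ₖ gₖ` with `gₖ = ∑ⱼ û(n+k) conj(û(k+j)) f̂(j)`:
`H_u² f(n)` is the sum over `k ≥ 0` and `K_u² f(n)` the sum over `k ≥ 1` (since `K_u = H_{S*u}`),
so they differ by `g₀ = (f|u) û(n)`. Splitting off `g₀` needs the double series to converge
absolutely; this follows from `2ab ≤ a² + b²` and `∑_{j,k} |û(j+k)|² = ∑ₘ (m+1) |û(m)|² < ∞`.
-/

/-- The Hankel operator `H_u` in Fourier coefficients: `(H_u f)(n) = ∑_k û(n+k) conj(f̂(k))`. -/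
noncomputable def hankelOp (u : ℕ → ℂ) (f : ℕ → ℂ) : ℕ → ℂ :=
  fun n => ∑' k : ℕ, u (n + k) * conj (f k)

/-- The shifted Hankel operator `K_u = H_{S*u}`: `(K_u f)(n) = ∑_k û(n+k+1) conj(f̂(k))`. -/
noncomputable def shiftedHankelOp (u : ℕ → ℂ) (f : ℕ → ℂ) : ℕ → ℂ :=
  fun n => ∑' k : ℕ, u (n + k + 1) * conj (f k)

theorem summable_comp_add_of_summable_succ_mul {w : ℕ → ℝ} (hw : 0 ≤ w)
    (h : Summable fun n : ℕ => ((n : ℝ) + 1) * w n) :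
    Summable fun p : ℕ × ℕ => w (p.1 + p.2) := by
  let e := Finset.HasAntidiagonal.sigmaAntidiagonalEquivProd (A := ℕ)
  rw [← e.summable_iff]
  have hfiber : ∀ x, w ((e x).1 + (e x).2) = w x.1 := by
    rintro ⟨n, p, hp⟩
    exact congrArg w (Finset.HasAntidiagonal.mem_antidiagonal.mp hp)
  simp only [Function.comp_def, hfiber]
  refine (summable_sigma_of_nonneg fun x => hw _).mpr ⟨fun _ => .of_finite, ?_⟩
  convert h using 2 with n
  dsimp only
  rw [tsum_const, Nat.card_eq_fintype_card, Fintype.card_coe, Finset.Nat.card_antidiagonal,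
    nsmul_eq_mul]
  push_cast
  ring

theorem shiftedHankelOp_eq_hankelOp (u : ℕ → ℂ) :
    shiftedHankelOp u = hankelOp fun m => u (m + 1) :=
  rfl

theorem hankelOp_hankelOp_apply (u v f : ℕ → ℂ) (n : ℕ) :
    hankelOp u (hankelOp v f) n = ∑' k, ∑' j, u (n + k) * (conj (v (k + j)) * f j) := by
  refine tsum_congr fun k => ?_
  simp only [hankelOp, Complex.conj_tsum, map_mul, Complex.conj_conj, ← tsum_mul_left]

theorem summable_hankelOp_hankelOp_kernel {u f : ℕ → ℂ}
    (hu : Summable fun k : ℕ => ((k : ℝ) + 1) * ‖u k‖ ^ 2)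
    (hf : Summable fun k : ℕ => ‖f k‖ ^ 2) (n : ℕ) :
    Summable fun p : ℕ × ℕ => u (n + p.1) * (conj (u (p.1 + p.2)) * f p.2) := by
  have hu₂ : Summable fun k : ℕ => ‖u k‖ ^ 2 :=
    hu.of_nonneg_of_le (fun _ => sq_nonneg _) fun k =>
      le_mul_of_one_le_left (sq_nonneg _) (by simp)
  have hprod : Summable fun p : ℕ × ℕ => ‖u (n + p.1)‖ ^ 2 * ‖f p.2‖ ^ 2 :=
    (hu₂.comp_injective (add_right_injective n)).mul_of_nonneg hf
      (fun _ => sq_nonneg _) fun _ => sq_nonneg _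
  have hdiag : Summable fun p : ℕ × ℕ => ‖u (p.1 + p.2)‖ ^ 2 :=
    summable_comp_add_of_summable_succ_mul (w := fun m => ‖u m‖ ^ 2) (fun _ => sq_nonneg _) hu
  refine ((hprod.add hdiag).div_const 2).of_norm_bounded fun p => ?_
  set a := ‖u (n + p.1)‖ * ‖f p.2‖
  set b := ‖u (p.1 + p.2)‖
  calc ‖u (n + p.1) * (conj (u (p.1 + p.2)) * f p.2)‖ = a * b := by
        rw [norm_mul, norm_mul, Complex.norm_conj]; ring
    _ ≤ (a ^ 2 + b ^ 2) / 2 := by linarith [two_mul_le_add_sq a b]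
    _ = _ := by simp only [a, b, mul_pow]

/-- For `u ∈ H^{1/2}_+` and every `f ∈ L²_+`, one has
`K_u²(f) = H_u²(f) − (f|u)·u`, where `(f|u) = ∑ f̂(k) conj(û(k))`. -/
theorem stmt3 (u f : ℕ → ℂ)
    (hu : Summable (fun k : ℕ => ((k : ℝ) + 1) * ‖u k‖ ^ 2))
    (hf : Summable (fun k : ℕ => ‖f k‖ ^ 2)) :
    ∀ n : ℕ,
      shiftedHankelOp u (shiftedHankelOp u f) n =
        hankelOp u (hankelOp u f) n - (∑' k : ℕ, f k * conj (u k)) * u n := by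
  intro n
  set g : ℕ → ℂ := fun k => ∑' j, u (n + k) * (conj (u (k + j)) * f j) with hg
  have hg_summable : Summable g := (summable_hankelOp_hankelOp_kernel hu hf n).prod
  have hK : shiftedHankelOp u (shiftedHankelOp u f) n = ∑' k, g (k + 1) := by
    simp only [shiftedHankelOp_eq_hankelOp, hankelOp_hankelOp_apply, hg, Nat.add_right_comm _ 1,
      ← add_assoc]
  have hg₀ : g 0 = (∑' k : ℕ, f k * conj (u k)) * u n := by
    simp only [hg, add_zero, zero_add, ← tsum_mul_right]
    exact tsum_congr fun j => by ring
  rw [hK, hankelOp_hankelOp_apply, ← hg, hg_summable.tsum_eq_zero_add, hg₀, add_sub_cancel_left]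
end

section
/- Fix c ∈ ℂ, c ≠ 0, and s > 1/2. For functions u_p(x) = c e^{ix}/(1 − p e^{ix}) with |p| < 1, as |p| → 1⁻, ‖u_p‖²_{H^s} ∼ Γ(2s+1) |c|²/(1−|p|²)^{2s+1}, i.e. the ratio of ‖u_p‖²_{H^s} to Γ(2s+1)|c|²(1−|p|²)^{−(2s+1)} tends to 1. -/
/-!
With `q = |p|²` and `b = 2s + 1` the squared norm is `|c|² ∑ₙ (1 + (n+1)²)^s qⁿ`. Its coefficients
are `~ n^(b-1)`, hence, by Euler's limit formula for `Γ`, asymptotic to `Γ(b)` times the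
coefficients `(b)ₙ / n!` of the binomial series of `(1 - q)^(-b)`. As that series diverges when
`q → 1⁻`, finitely many terms are negligible, and an Abelian argument turns the equivalence of the
coefficients into the equivalence of the sums.
-/

open Asymptotics Filter Finset Topology Set
open scoped Nat

theorem Real.hasSum_choose_mul_pow (a : ℝ) {q : ℝ} (hq : |q| < 1) :
    HasSum (fun n : ℕ => Ring.choose (a + n - 1) n * q ^ n) ((1 - q) ^ (-a)) := by
  have hmem : q ∈ Metric.eball (0 : ℝ) 1 := by
    simpa [Metric.mem_eball, edist_zero_right, enorm_eq_nnnorm, ← NNReal.coe_lt_one] using hq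
  have := (Real.one_div_one_sub_rpow_hasFPowerSeriesOnBall_zero a).hasSum hmem
  have h1q : 0 ≤ 1 - q := by linarith [le_abs_self q]
  simpa [FormalMultilinearSeries.ofScalars_apply_eq, Real.rpow_neg h1q, mul_comm] using this

theorem Ring.choose_add_sub_one_eq_prod_div (b : ℝ) (n : ℕ) :
    Ring.choose (b + n - 1) n = (∏ j ∈ range n, (b + j)) / n ! := by
  have hprod : (ascPochhammer ℝ n).eval b = ∏ j ∈ range n, (b + j) := by
    induction n with
    | zero => simp
    | succ n ih => simp [ascPochhammer_succ_right, ih, prod_range_succ]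
  rw [← Ring.multichoose_eq, eq_div_iff (by positivity), mul_comm, ← nsmul_eq_mul,
    Ring.factorial_nsmul_multichoose_eq_ascPochhammer, Polynomial.ascPochhammer_smeval_eq_eval,
    hprod]

theorem Ring.choose_add_sub_one_nonneg {b : ℝ} (hb : 0 ≤ b) (n : ℕ) :
    0 ≤ Ring.choose (b + n - 1) n := by
  rw [Ring.choose_add_sub_one_eq_prod_div]
  exact div_nonneg (prod_nonneg fun j _ => by positivity) (by positivity)

theorem Ring.isEquivalent_choose_add_sub_one {b : ℝ} (hb : 0 < b) :
    (fun n : ℕ => Ring.choose (b + n - 1) n) ~[atTop]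
      fun n => (n : ℝ) ^ (b - 1) / Real.Gamma b := by
  have hΓ := Real.Gamma_pos_of_pos hb
  refine isEquivalent_of_tendsto_one ?_
  have hlim : Tendsto (fun n : ℕ => (n : ℝ) / (n + b) * (Real.Gamma b / Real.GammaSeq b n))
      atTop (𝓝 (1 * 1)) := by
    refine (tendsto_natCast_div_add_atTop b).mul ?_
    have h := (tendsto_const_nhds (x := Real.Gamma b)).div (Real.GammaSeq_tendsto_Gamma b) hΓ.ne'
    rw [div_self hΓ.ne'] at h
    exact h
  rw [mul_one] at hlim
  refine hlim.congr' ?_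
  filter_upwards [eventually_gt_atTop 0] with n hn
  have hn' : (0 : ℝ) < n := by exact_mod_cast hn
  have hP : 0 < ∏ j ∈ range n, (b + j) := prod_pos fun j _ => by positivity
  simp only [Pi.div_apply, Ring.choose_add_sub_one_eq_prod_div, Real.GammaSeq, prod_range_succ,
    Real.rpow_sub_one hn'.ne']
  have hnb : (0 : ℝ) < (n : ℝ) ^ b := by positivity
  field_simp
  ring

theorem Asymptotics.IsLittleO.tsum_mul_pow {a w : ℕ → ℝ} (hw : ∀ n, 0 ≤ w n) (ha : a =o[atTop] w)
    (hsum : ∀ q ∈ Ioo (0 : ℝ) 1, Summable fun n => w n * q ^ n)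
    (hdiv : Tendsto (fun q => ∑' n, w n * q ^ n) (𝓝[<] 1) atTop) :
    (fun q => ∑' n, a n * q ^ n) =o[𝓝[<] 1] fun q => ∑' n, w n * q ^ n := by
  refine isLittleO_iff.2 fun ε hε => ?_
  obtain ⟨N, hN⟩ := eventually_atTop.1 (ha.bound (half_pos hε))
  set D := ∑ n ∈ range N, |a n|
  filter_upwards [hdiv.eventually_ge_atTop (2 * D / ε), Ioo_mem_nhdsLT zero_lt_one] with q hDq hq
  set S := ∑' n, w n * q ^ n
  have hS : 0 ≤ S := tsum_nonneg fun n => mul_nonneg (hw n) (pow_nonneg hq.1.le n)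
  have hD : D ≤ ε / 2 * S := by
    rw [div_le_iff₀ hε] at hDq
    linarith
  -- the first `N` terms contribute at most `D`, the others at most `ε / 2` times the weights
  set g : ℕ → ℝ := fun n => (if n < N then |a n| else 0) + ε / 2 * (w n * q ^ n)
  have hg : HasSum g (D + ε / 2 * S) := by
    refine HasSum.add ?_ ((hsum q hq).hasSum.mul_left _)
    have h : HasSum _ _ := hasSum_sum_of_ne_finset_zero (s := range N)
      (f := fun n => if n < N then |a n| else 0) fun n hn => if_neg (by simpa using hn)
    rwa [Finset.sum_congr rfl fun n hn => if_pos (mem_range.1 hn)] at h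
  have hle : ∀ n, ‖a n * q ^ n‖ ≤ g n := by
    intro n
    have hqn : 0 ≤ q ^ n := pow_nonneg hq.1.le n
    have hwq : 0 ≤ ε / 2 * (w n * q ^ n) := by have := hw n; positivity
    rw [norm_mul, Real.norm_eq_abs, Real.norm_eq_abs, abs_of_nonneg hqn]
    by_cases hn : n < N
    · simp only [g, if_pos hn]
      nlinarith [abs_nonneg (a n), pow_le_one₀ hq.1.le hq.2.le (n := n)]
    · simp only [g, if_neg hn, zero_add]
      have := hN n (not_lt.1 hn)
      rw [Real.norm_eq_abs, Real.norm_eq_abs, abs_of_nonneg (hw n)] at this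
      nlinarith
  have hnorm : Summable fun n => ‖a n * q ^ n‖ :=
    hg.summable.of_nonneg_of_le (fun _ => norm_nonneg _) hle
  calc ‖∑' n, a n * q ^ n‖ ≤ ∑' n, ‖a n * q ^ n‖ := norm_tsum_le_tsum_norm hnorm
    _ ≤ D + ε / 2 * S := hnorm.tsum_le_tsum hle hg.summable |>.trans_eq hg.tsum_eq
    _ ≤ ε * ‖S‖ := by rw [Real.norm_eq_abs, abs_of_nonneg hS]; linarith

theorem Asymptotics.IsEquivalent.tsum_mul_pow {a w : ℕ → ℝ} (hw : ∀ n, 0 ≤ w n) (ha : a ~[atTop] w)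
    (hsum : ∀ q ∈ Ioo (0 : ℝ) 1, Summable fun n => w n * q ^ n)
    (hdiv : Tendsto (fun q => ∑' n, w n * q ^ n) (𝓝[<] 1) atTop) :
    (fun q => ∑' n, a n * q ^ n) ~[𝓝[<] 1] fun q => ∑' n, w n * q ^ n := by
  refine ((ha.isLittleO.tsum_mul_pow hw hsum hdiv).congr' ?_ EventuallyEq.rfl).isEquivalent
  filter_upwards [Ioo_mem_nhdsLT zero_lt_one] with q hq
  have hasum : Summable fun n => a n * q ^ n :=
    summable_of_isBigO_nat (hsum q hq) (ha.isBigO.mul (isBigO_refl _ _))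
  simp only [Pi.sub_apply, sub_mul]
  exact hasum.tsum_sub (hsum q hq)

theorem isEquivalent_one_add_sq_rpow (s : ℝ) :
    (fun n : ℕ => (1 + ((n : ℝ) + 1) ^ 2) ^ s) ~[atTop] fun n => (n : ℝ) ^ (2 * s) := by
  have hlow : (fun x : ℝ => 2 * x + 2) =o[atTop] fun x => x ^ 2 := by
    refine IsLittleO.add ?_ ?_
    · simpa using (isLittleO_pow_pow_atTop_of_lt one_lt_two).const_mul_left (2 : ℝ)
    · exact isLittleO_const_left.2
        (Or.inr (tendsto_norm_atTop_atTop.comp (tendsto_pow_atTop two_ne_zero)))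
  have hsq : (fun n : ℕ => 1 + ((n : ℝ) + 1) ^ 2) ~[atTop] fun n => (n : ℝ) ^ 2 := by
    refine ((IsEquivalent.refl.add_isLittleO hlow).comp_tendsto
      tendsto_natCast_atTop_atTop).congr_left (Eventually.of_forall fun n => ?_)
    simp only [Function.comp_apply, Pi.add_apply]
    ring
  refine (hsq.rpow (fun n => by positivity) (r := s)).congr_right ?_
  filter_upwards with n
  simp only [Pi.pow_apply]
  rw [← Real.rpow_natCast, ← Real.rpow_mul (Nat.cast_nonneg n)]
  norm_num

theorem isEquivalent_tsum_one_add_sq_rpow_mul_pow {s : ℝ} (hs : -(1 / 2) < s) :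
    (fun q => ∑' n : ℕ, (1 + ((n : ℝ) + 1) ^ 2) ^ s * q ^ n) ~[𝓝[<] 1]
      fun q => Real.Gamma (2 * s + 1) * (1 - q) ^ (-(2 * s + 1)) := by
  set b := 2 * s + 1
  have hb : 0 < b := by linarith
  have hΓ := Real.Gamma_pos_of_pos hb
  set w : ℕ → ℝ := fun n => Real.Gamma b * Ring.choose (b + n - 1) n
  have hw : ∀ q, |q| < 1 → HasSum (fun n => w n * q ^ n) (Real.Gamma b * (1 - q) ^ (-b)) := by
    intro q hq
    simpa only [w, mul_assoc] using (Real.hasSum_choose_mul_pow b hq).mul_left (Real.Gamma b)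
  have hequiv : (fun n : ℕ => (1 + ((n : ℝ) + 1) ^ 2) ^ s) ~[atTop] w := by
    refine (isEquivalent_one_add_sq_rpow s).trans ?_
    refine ((IsEquivalent.refl (u := fun _ => Real.Gamma b)).mul
      (Ring.isEquivalent_choose_add_sub_one hb)).symm.congr_left ?_
    filter_upwards with n
    simp only [Pi.mul_apply, b, add_sub_cancel_right]
    exact mul_div_cancel₀ _ hΓ.ne'
  have hsum_eq : ∀ᶠ q in 𝓝[<] (1 : ℝ), ∑' n, w n * q ^ n = Real.Gamma b * (1 - q) ^ (-b) := by
    filter_upwards [Ioo_mem_nhdsLT zero_lt_one] with q hq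
    exact (hw q (abs_lt.2 ⟨by linarith [hq.1], hq.2⟩)).tsum_eq
  have hdiv : Tendsto (fun q : ℝ => Real.Gamma b * (1 - q) ^ (-b)) (𝓝[<] 1) atTop := by
    refine ((tendsto_rpow_neg_nhdsGT_zero (neg_lt_zero.2 hb)).comp ?_).const_mul_atTop hΓ
    refine tendsto_nhdsWithin_iff.2 ⟨?_, ?_⟩
    · have h := ((continuous_sub_left (1 : ℝ)).tendsto 1).mono_left
        (nhdsWithin_le_nhds (s := Iio 1))
      rwa [sub_self] at h
    · filter_upwards [self_mem_nhdsWithin] with q hq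
      exact sub_pos.2 (mem_Iio.1 hq)
  refine (hequiv.tsum_mul_pow (fun n => ?_) (fun q hq => ?_) ?_).congr_right hsum_eq
  · exact mul_nonneg hΓ.le (Ring.choose_add_sub_one_nonneg hb.le n)
  · exact (hw q (abs_lt.2 ⟨by linarith [hq.1], hq.2⟩)).summable
  · exact hdiv.congr' (hsum_eq.mono fun q hq => hq.symm)

theorem tsum_rpow_mul_norm_sq_ite_eq (c p : ℂ) (s : ℝ) :
    ∑' k : ℕ, (1 + (k : ℝ) ^ 2) ^ s * ‖(if k = 0 then 0 else c * p ^ (k - 1) : ℂ)‖ ^ 2 =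
      ‖c‖ ^ 2 * ∑' n : ℕ, (1 + ((n : ℝ) + 1) ^ 2) ^ s * (‖p‖ ^ 2) ^ n := by
  have hsupp : Function.support (fun k : ℕ =>
      (1 + (k : ℝ) ^ 2) ^ s * ‖(if k = 0 then 0 else c * p ^ (k - 1) : ℂ)‖ ^ 2) ⊆
      range Nat.succ := by
    rintro (_ | n) hn
    · simp at hn
    · exact ⟨n, rfl⟩
  rw [← Nat.succ_injective.tsum_eq hsupp, ← tsum_mul_left]
  congr 1 with n
  simp only [Nat.succ_ne_zero, if_false, Nat.succ_sub_one, norm_mul, norm_pow, Nat.cast_succ]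
  ring

theorem tendsto_norm_sq_comap_norm_nhdsLT_one {E : Type*} [SeminormedAddCommGroup E] :
    Tendsto (fun p : E => ‖p‖ ^ 2) (comap (fun p : E => ‖p‖) (𝓝[<] 1)) (𝓝[<] 1) := by
  have hnorm : Tendsto (fun p : E => ‖p‖) (comap (fun p : E => ‖p‖) (𝓝[<] 1)) (𝓝[<] 1) :=
    tendsto_comap
  refine tendsto_nhdsWithin_iff.2 ⟨?_, ?_⟩
  · simpa using (hnorm.mono_right nhdsWithin_le_nhds).pow 2
  · filter_upwards [hnorm.eventually self_mem_nhdsWithin] with p hp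
    exact pow_lt_one₀ (norm_nonneg p) hp two_ne_zero

/-- For fixed `c ≠ 0` and `s > 1/2`, with `u_p(x) = c e^{ix}/(1 − p e^{ix})`, as
`|p| → 1⁻` one has `‖u_p‖²_{H^s} ∼ Γ(2s+1)|c|²/(1−|p|²)^{2s+1}`: the ratio of the two
quantities tends to `1`. -/
theorem stmt12 (c : ℂ) (hc : c ≠ 0) (s : ℝ) (hs : 1 / 2 < s) :
    Filter.Tendsto
      (fun p : ℂ =>
        (∑' k : ℕ, (1 + (k : ℝ) ^ 2) ^ s *
            ‖(if k = 0 then 0 else c * p ^ (k - 1) : ℂ)‖ ^ 2) /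
          (Real.Gamma (2 * s + 1) * ‖c‖ ^ 2 * (1 - ‖p‖ ^ 2) ^ (-(2 * s + 1))))
      (Filter.comap (fun p : ℂ => ‖p‖) (nhdsWithin 1 (Set.Iio 1)))
      (nhds 1) := by
  have hne : ∀ᶠ q in 𝓝[<] (1 : ℝ), Real.Gamma (2 * s + 1) * (1 - q) ^ (-(2 * s + 1)) ≠ 0 := by
    filter_upwards [self_mem_nhdsWithin] with q hq
    exact mul_ne_zero (Real.Gamma_pos_of_pos (by linarith)).ne'
      (Real.rpow_pos_of_pos (sub_pos.2 (mem_Iio.1 hq)) _).ne'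
  have hlim := (isEquivalent_iff_tendsto_one hne).1
    (isEquivalent_tsum_one_add_sq_rpow_mul_pow (by linarith))
  refine (hlim.comp tendsto_norm_sq_comap_norm_nhdsLT_one).congr fun p => ?_
  have hc' : ‖c‖ ^ 2 ≠ 0 := pow_ne_zero 2 (norm_ne_zero_iff.2 hc)
  simp only [Function.comp_apply, Pi.div_apply, tsum_rpow_mul_norm_sq_ite_eq]
  rw [mul_right_comm _ (‖c‖ ^ 2), mul_comm _ (‖c‖ ^ 2), mul_div_mul_left _ _ hc']
end

section
/- Let κ > 0 and let γ : [0,∞) → (0,∞) be continuous, square-integrable, satisfying γ(t) = (1/κ)(∫_t^∞ γ(s)² ds)(1 + o(1)) as t → ∞. Then ∫_t^∞ γ(s)² ds = κ²/t · (1+o(1)) and γ(t) = κ/t · (1+o(1)) as t → +∞. -/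
/-
With `Γ t = ∫_t^∞ γ²`, we have `Γ' = -γ²`, so the hypothesis reads `-Γ'/Γ² → 1/κ²`, i.e. the
derivative of `1/Γ` tends to `1/κ²`. By the mean value theorem `1/Γ(t) ~ t/κ²`, that is
`Γ(t) ~ κ²/t`, and then `γ(t) ~ Γ(t)/κ ~ κ/t`.
-/

open Filter MeasureTheory Set Topology Asymptotics

theorem isLittleO_id_atTop_of_hasDerivAt_of_tendsto_zero {E : Type*} [NormedAddCommGroup E]
    [NormedSpace ℝ E] {g g' : ℝ → E} (hderiv : ∀ᶠ x in atTop, HasDerivAt g (g' x) x)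
    (hlim : Tendsto g' atTop (𝓝 0)) : g =o[atTop] id := by
  refine IsLittleO.of_bound fun ε hε => ?_
  obtain ⟨T, hT⟩ := eventually_atTop.1 <| (hderiv.and (eventually_ge_atTop 0)).and <|
    (tendsto_zero_iff_norm_tendsto_zero.1 hlim).eventually_le_const (half_pos hε)
  have hT₀ : 0 ≤ T := (hT T le_rfl).1.2
  have hmvt : ∀ t ≥ T, ‖g t - g T‖ ≤ ε / 2 * ‖t - T‖ :=
    fun t ht => (convex_Ici T).norm_image_sub_le_of_norm_hasDerivWithin_le
      (fun x hx => (hT x hx).1.1.hasDerivWithinAt) (fun x hx => (hT x hx).2) self_mem_Ici ht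
  filter_upwards [eventually_ge_atTop T, eventually_ge_atTop (2 / ε * ‖g T‖)] with t hTt hgT
  have hgT' : ‖g T‖ ≤ ε / 2 * t := by
    rw [div_mul_eq_mul_div, div_le_iff₀ hε] at hgT; linarith
  calc ‖g t‖ ≤ ‖g t - g T‖ + ‖g T‖ := norm_le_norm_sub_add _ _
    _ ≤ ε / 2 * (t - T) + ε / 2 * t := by
        gcongr
        simpa [Real.norm_eq_abs, abs_of_nonneg (sub_nonneg.2 hTt)] using hmvt t hTt
    _ ≤ ε * ‖id t‖ := by
        rw [id, Real.norm_of_nonneg (hT₀.trans hTt)]; nlinarith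

theorem tendsto_div_id_atTop_of_hasDerivAt_of_tendsto {f f' : ℝ → ℝ} {c : ℝ}
    (hderiv : ∀ᶠ x in atTop, HasDerivAt f (f' x) x) (hlim : Tendsto f' atTop (𝓝 c)) :
    Tendsto (fun t => f t / t) atTop (𝓝 c) := by
  have hsmall : (fun t => f t - c * t) =o[atTop] id :=
    isLittleO_id_atTop_of_hasDerivAt_of_tendsto_zero
      (hderiv.mono fun x hx => hx.sub ((hasDerivAt_id x).const_mul c))
      (by simpa using hlim.sub_const c)
  have hlim' := hsmall.tendsto_div_nhds_zero.add_const c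
  rw [zero_add] at hlim'
  refine hlim'.congr' ?_
  filter_upwards [eventually_ne_atTop 0] with t ht
  simp [sub_div, ht]

theorem tendsto_mul_id_atTop_of_hasDerivAt_of_tendsto_div_sq {Γ Γ' : ℝ → ℝ} {c : ℝ}
    (hne : ∀ᶠ t in atTop, Γ t ≠ 0) (hderiv : ∀ᶠ t in atTop, HasDerivAt Γ (Γ' t) t)
    (hlim : Tendsto (fun t => -Γ' t / Γ t ^ 2) atTop (𝓝 c)) (hc : c ≠ 0) :
    Tendsto (fun t => Γ t * t) atTop (𝓝 c⁻¹) := by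
  have hinv : Tendsto (fun t => (Γ t)⁻¹ / t) atTop (𝓝 c) :=
    tendsto_div_id_atTop_of_hasDerivAt_of_tendsto
      ((hderiv.and hne).mono fun t ht => ht.1.inv ht.2) hlim
  simpa [inv_div, div_inv_eq_mul, mul_comm] using hinv.inv₀ hc

theorem hasDerivAt_integral_Ioi {E : Type*} [NormedAddCommGroup E] [NormedSpace ℝ E]
    [CompleteSpace E] {f : ℝ → E} {a t : ℝ} (hf : IntegrableOn f (Ioi a)) (hat : a < t)
    (hft : ContinuousAt f t) : HasDerivAt (fun u => ∫ x in Ioi u, f x) (-f t) t := by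
  have hint : IntervalIntegrable f volume a t :=
    (intervalIntegrable_iff_integrableOn_Ioc_of_le hat.le).2 (hf.mono_set Ioc_subset_Ioi_self)
  have hmeas : StronglyMeasurableAtFilter f (𝓝 t) :=
    ⟨Ioi a, Ioi_mem_nhds hat, hf.aestronglyMeasurable⟩
  refine ((intervalIntegral.integral_hasDerivAt_right hint hmeas hft).const_sub
    (∫ x in Ioi a, f x)).congr_of_eventuallyEq ?_
  filter_upwards [Ioi_mem_nhds hat] with u hu
  rw [← intervalIntegral.integral_Ioi_sub_Ioi hf (le_of_lt hu), sub_sub_cancel]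

theorem stmt15_general (κ : ℝ) (γ : ℝ → ℝ)
    (hcont : ContinuousOn γ (Set.Ici (0 : ℝ)))
    (hL2 : MeasureTheory.IntegrableOn (fun t => γ t ^ 2) (Set.Ici (0 : ℝ)))
    (hyp : Filter.Tendsto (fun t : ℝ => κ * γ t / ∫ s in Set.Ioi t, γ s ^ 2)
      Filter.atTop (nhds 1)) :
    Filter.Tendsto (fun t : ℝ => (∫ s in Set.Ioi t, γ s ^ 2) * t / κ ^ 2)
        Filter.atTop (nhds 1) ∧
    Filter.Tendsto (fun t : ℝ => γ t * t / κ) Filter.atTop (nhds 1) := by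
  set Γ : ℝ → ℝ := fun t => ∫ s in Ioi t, γ s ^ 2
  change Tendsto (fun t => κ * γ t / Γ t) atTop (𝓝 1) at hyp
  show Tendsto (fun t => Γ t * t / κ ^ 2) atTop (𝓝 1) ∧ _
  have hratio_ne : ∀ᶠ t in atTop, κ * γ t / Γ t ≠ 0 := hyp.eventually_ne one_ne_zero
  have hΓ : ∀ᶠ t in atTop, Γ t ≠ 0 := hratio_ne.mono fun t ht => (div_ne_zero_iff.1 ht).2
  have hκ : κ ≠ 0 := by
    obtain ⟨t, ht⟩ := hratio_ne.exists
    exact left_ne_zero_of_mul (div_ne_zero_iff.1 ht).1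
  have hderiv : ∀ᶠ t in atTop, HasDerivAt Γ (-(γ t ^ 2)) t := by
    filter_upwards [eventually_gt_atTop 0] with t ht
    exact hasDerivAt_integral_Ioi (hL2.mono_set Ioi_subset_Ici_self) ht
      ((hcont.continuousAt (Ici_mem_nhds ht)).pow 2)
  have hode : Tendsto (fun t => -(-(γ t ^ 2)) / Γ t ^ 2) atTop (𝓝 (1 ^ 2 / κ ^ 2)) := by
    refine ((hyp.pow 2).div_const (κ ^ 2)).congr' ?_
    filter_upwards [hΓ] with t ht
    field_simp
  have hΓt : Tendsto (fun t => Γ t * t) atTop (𝓝 (κ ^ 2)) := by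
    simpa using tendsto_mul_id_atTop_of_hasDerivAt_of_tendsto_div_sq hΓ hderiv hode
      (by positivity)
  have hκ2 : κ ^ 2 ≠ 0 := pow_ne_zero 2 hκ
  refine ⟨div_self hκ2 ▸ hΓt.div_const (κ ^ 2), ?_⟩
  have hlim := (hyp.mul hΓt).div_const (κ ^ 2)
  rw [one_mul, div_self hκ2] at hlim
  refine hlim.congr' ?_
  filter_upwards [hΓ] with t ht
  field_simp

/-- If `γ > 0` is continuous and square-integrable on `[0,∞)` and satisfies
`γ(t) = (1/κ)(∫_t^∞ γ² ds)(1+o(1))` as `t → ∞`, then `∫_t^∞ γ² ds = κ²/t (1+o(1))`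
and `γ(t) = κ/t (1+o(1))`. -/
theorem stmt15 (κ : ℝ) (hκ : 0 < κ) (γ : ℝ → ℝ)
    (hcont : ContinuousOn γ (Set.Ici (0 : ℝ)))
    (hpos : ∀ t : ℝ, 0 ≤ t → 0 < γ t)
    (hL2 : MeasureTheory.IntegrableOn (fun t => γ t ^ 2) (Set.Ici (0 : ℝ)))
    (hyp : Filter.Tendsto (fun t : ℝ => κ * γ t / ∫ s in Set.Ioi t, γ s ^ 2)
      Filter.atTop (nhds 1)) :
    Filter.Tendsto (fun t : ℝ => (∫ s in Set.Ioi t, γ s ^ 2) * t / κ ^ 2)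
        Filter.atTop (nhds 1) ∧
    Filter.Tendsto (fun t : ℝ => γ t * t / κ) Filter.atTop (nhds 1) :=
  stmt15_general κ γ hcont hL2 hyp
end

section
/- Let A be the real 4×4 matrix with rows (2α, 0, 0, −2), (0, 0, 0, −2), (0, 0, α, 2M), (−M², −M², −2M, α), where α, M > 0. Then the eigenvalues of A are α + a, α − a, α + i√(a²−α²), α − i√(a²−α²), where a = ((√(α⁴+16M²α²)+α²)/2)^{1/2}. -/
/-!
In the shifted variable `t = X - α` the characteristic polynomial of `A` is the biquadratic
`t⁴ - α² t² - 4 M² α²`. Its roots satisfy `t² = a²` or `t² = α² - a²`, because `a²` is the larger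
root of `s² - α² s - 4 M² α²`; since `a² ≥ α²`, the second pair is `t = ± i √(a² - α²)`.
-/

open Polynomial

section
variable {R : Type*} [CommRing R]

def dampedSzegoLinearization (α M : R) : Matrix (Fin 4) (Fin 4) R :=
  !![2 * α, 0, 0, -2;
     0, 0, 0, -2;
     0, 0, α, 2 * M;
     -(M ^ 2), -(M ^ 2), -(2 * M), α]

theorem charmatrix_dampedSzegoLinearization (α M : R) :
    (dampedSzegoLinearization α M).charmatrix =
      !![X - C (2 * α), 0, 0, C 2;
         0, X, 0, C 2;
         0, 0, X - C α, -C (2 * M);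
         C (M ^ 2), C (M ^ 2), C (2 * M), X - C α] := by
  ext i j
  fin_cases i <;> fin_cases j <;>
    simp [dampedSzegoLinearization, Matrix.charmatrix_apply_eq, Matrix.charmatrix_apply_ne]

theorem charpoly_dampedSzegoLinearization (α M : R) :
    (dampedSzegoLinearization α M).charpoly =
      (X - C α) ^ 4 - C (α ^ 2) * (X - C α) ^ 2 - C (4 * M ^ 2 * α ^ 2) := by
  have h : Fin.succAbove (3 : Fin 4) 2 = 2 := rfl
  rw [Matrix.charpoly, charmatrix_dampedSzegoLinearization]
  simp [Matrix.det_succ_row_zero, Fin.sum_univ_succ, h, map_ofNat]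
  ring

theorem biquadratic_shift_eq_prod {α a c k : R} (hsum : a ^ 2 + c ^ 2 = α ^ 2)
    (hprod : a ^ 2 * c ^ 2 = -k) :
    (X - C α) ^ 4 - C (α ^ 2) * (X - C α) ^ 2 - C k =
      (X - C (α + a)) * ((X - C (α - a)) * ((X - C (α + c)) * (X - C (α - c)))) := by
  rw [← hsum, ← neg_neg k, ← hprod]
  simp only [map_add, map_sub, map_mul, map_pow, map_neg]
  ring

theorem roots_charpoly_dampedSzegoLinearization [IsDomain R] {α M a c : R}
    (hsum : a ^ 2 + c ^ 2 = α ^ 2) (hprod : a ^ 2 * c ^ 2 = -(4 * M ^ 2 * α ^ 2)) :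
    (dampedSzegoLinearization α M).charpoly.roots = {α + a, α - a, α + c, α - c} := by
  rw [← roots_multiset_prod_X_sub_C {α + a, α - a, α + c, α - c},
    charpoly_dampedSzegoLinearization, biquadratic_shift_eq_prod hsum hprod]
  simp only [Multiset.insert_eq_cons, Multiset.map_cons, Multiset.prod_cons,
    Multiset.map_singleton, Multiset.prod_singleton]

end

theorem le_sq_and_sq_mul_sq_sub_of_eq_sqrt {p q a : ℝ} (hq : 0 ≤ q)
    (ha : a = √((√(p ^ 2 + q) + p) / 2)) : p ≤ a ^ 2 ∧ a ^ 2 * (a ^ 2 - p) = q / 4 := by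
  have hp : |p| ≤ √(p ^ 2 + q) := Real.abs_le_sqrt (le_add_of_nonneg_right hq)
  have ha2 : a ^ 2 = (√(p ^ 2 + q) + p) / 2 := by
    rw [ha, Real.sq_sqrt (by linarith [neg_abs_le p])]
  refine ⟨by linarith [le_abs_self p], ?_⟩
  rw [ha2]
  linear_combination Real.sq_sqrt (add_nonneg (sq_nonneg p) hq) / 4

theorem stmt18_general (α M : ℝ)
    (a : ℝ) (ha : a = Real.sqrt ((Real.sqrt (α ^ 4 + 16 * M ^ 2 * α ^ 2) + α ^ 2) / 2))
    (A : Matrix (Fin 4) (Fin 4) ℂ)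
    (hA : A = !![(2 * α : ℂ), 0, 0, -2;
                 0, 0, 0, -2;
                 0, 0, (α : ℂ), (2 * M : ℂ);
                 (-(M ^ 2) : ℂ), (-(M ^ 2) : ℂ), (-(2 * M) : ℂ), (α : ℂ)]) :
    A.charpoly.roots =
      {((α : ℂ) + a), ((α : ℂ) - a),
        ((α : ℂ) + Complex.I * (Real.sqrt (a ^ 2 - α ^ 2) : ℝ)),
        ((α : ℂ) - Complex.I * (Real.sqrt (a ^ 2 - α ^ 2) : ℝ))} := by
  rw [show α ^ 4 = (α ^ 2) ^ 2 by ring] at ha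
  obtain ⟨hαa, hkey⟩ := le_sq_and_sq_mul_sq_sub_of_eq_sqrt (by positivity) ha
  set b := √(a ^ 2 - α ^ 2)
  have hb : (b : ℂ) ^ 2 = (a : ℂ) ^ 2 - (α : ℂ) ^ 2 := by
    exact_mod_cast Real.sq_sqrt (sub_nonneg.2 hαa)
  have hkeyC : (a : ℂ) ^ 2 * ((a : ℂ) ^ 2 - (α : ℂ) ^ 2) = 4 * (M : ℂ) ^ 2 * (α : ℂ) ^ 2 := by
    exact_mod_cast hkey.trans (by ring)
  rw [hA]
  apply roots_charpoly_dampedSzegoLinearization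
  · linear_combination (b : ℂ) ^ 2 * Complex.I_sq - hb
  · linear_combination (a : ℂ) ^ 2 * (b : ℂ) ^ 2 * Complex.I_sq - (a : ℂ) ^ 2 * hb - hkeyC

/-- The eigenvalues (with multiplicity, i.e. the roots of the characteristic
polynomial) of the matrix
`A = !![2α, 0, 0, −2; 0, 0, 0, −2; 0, 0, α, 2M; −M², −M², −2M, α]`
are `α + a`, `α − a`, `α + i√(a²−α²)`, `α − i√(a²−α²)`,
where `a = ((√(α⁴+16M²α²)+α²)/2)^{1/2}`. -/
theorem stmt18 (α M : ℝ) (hα : 0 < α) (hM : 0 < M)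
    (a : ℝ) (ha : a = Real.sqrt ((Real.sqrt (α ^ 4 + 16 * M ^ 2 * α ^ 2) + α ^ 2) / 2))
    (A : Matrix (Fin 4) (Fin 4) ℂ)
    (hA : A = !![(2 * α : ℂ), 0, 0, -2;
                 0, 0, 0, -2;
                 0, 0, (α : ℂ), (2 * M : ℂ);
                 (-(M ^ 2) : ℂ), (-(M ^ 2) : ℂ), (-(2 * M) : ℂ), (α : ℂ)]) :
    A.charpoly.roots =
      {((α : ℂ) + a), ((α : ℂ) - a),
        ((α : ℂ) + Complex.I * (Real.sqrt (a ^ 2 - α ^ 2) : ℝ)),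
        ((α : ℂ) - Complex.I * (Real.sqrt (a ^ 2 - α ^ 2) : ℝ))} :=
  stmt18_general α M a ha A hA
end
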